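/- arXiv:1506.06345 — 6 statements merged into one kernel-verified Lean document; each statement's English description precedes it below -/
import Mathlib

section
/- Let F be the N×N DFT matrix with entries F_{j,k} = e^{2πi jk/N}/√N, let M ⊆ {1,…,N} be a nonempty proper subset, and let Φ = √(N/|M|)·F_M. Then the mean square coherence satisfies μ̄² = (N - |M|)/((N-1)|M|), i.e., (1/(N(N-1)))∑_{j≠k}|⟨φ_j,φ_k⟩|² = (N-|M|)/((N-1)|M|). -/
/-!
With `ζ = e^{2πi/N}` and `φ j t = c ζ^{jt}`, the `j`-th row of the Gram matrix is the DFT of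
`t ↦ 1_M(t) |c|² ζ^{-jt}`, so Parseval gives `∑_k |⟨φ_j, φ_k⟩|² = N |M| |c|⁴` for every `j`,
while the diagonal entries are `|M| |c|²`. Removing the diagonal and using `|c|² = 1/|M|` gives
`∑_{j ≠ k} |⟨φ_j, φ_k⟩|² = N (N - |M|) / |M|`.
-/

open Complex Finset
open scoped ComplexConjugate

theorem Finset.sum_offDiag_eq_sum_sum_sub_sum_diag {ι G : Type*} [DecidableEq ι]
    [AddCommGroup G] (s : Finset ι) (f : ι × ι → G) :
    ∑ p ∈ s.offDiag, f p = ∑ i ∈ s, ∑ j ∈ s, f (i, j) - ∑ i ∈ s, f (i, i) := by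
  rw [eq_sub_iff_add_eq, ← sum_diag, add_comm, ← sum_union (disjoint_diag_offDiag s),
    diag_union_offDiag, sum_product]

namespace IsPrimitiveRoot

variable {N : ℕ}

theorem sum_pow_mul_inv_pow {K : Type*} [Field K] {ζ : K} (hζ : IsPrimitiveRoot ζ N)
    (t s : Fin N) :
    ∑ k : Fin N, ζ ^ ((k : ℕ) * t) * (ζ ^ ((k : ℕ) * s))⁻¹ = if t = s then (N : K) else 0 := by
  have hζ0 : ζ ≠ 0 := hζ.ne_zero t.pos.ne'
  set ρ := ζ ^ (t : ℕ) * (ζ ^ (s : ℕ))⁻¹ with hρ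
  have hterm (k : Fin N) : ζ ^ ((k : ℕ) * t) * (ζ ^ ((k : ℕ) * s))⁻¹ = ρ ^ (k : ℕ) := by
    rw [hρ, mul_pow, inv_pow, ← pow_mul, ← pow_mul, mul_comm (t : ℕ), mul_comm (s : ℕ)]
  rw [Fintype.sum_congr _ _ hterm, Fin.sum_univ_eq_sum_range (ρ ^ ·)]
  split_ifs with hts
  · simp [hρ, hts, hζ0]
  · have hρ1 : ρ ≠ 1 := fun h => hts <| Fin.ext <|
      hζ.pow_inj t.isLt s.isLt ((mul_inv_eq_one₀ (pow_ne_zero _ hζ0)).mp h)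
    have hρN : ρ ^ N = 1 := by
      rw [hρ, mul_pow, inv_pow, pow_right_comm, pow_right_comm ζ (s : ℕ), hζ.pow_eq_one]
      simp
    rw [geom_sum_eq hρ1, hρN, sub_self, zero_div]

theorem norm_pow_eq_one {ζ : ℂ} (hζ : IsPrimitiveRoot ζ N) (hN : N ≠ 0) (n : ℕ) :
    ‖ζ ^ n‖ = 1 := by
  rw [norm_pow, hζ.norm'_eq_one hN, one_pow]

theorem sum_pow_mul_conj_pow {ζ : ℂ} (hζ : IsPrimitiveRoot ζ N) (t s : Fin N) :
    ∑ k : Fin N, ζ ^ ((k : ℕ) * t) * conj (ζ ^ ((k : ℕ) * s)) =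
      if t = s then (N : ℂ) else 0 := by
  simp only [← inv_eq_conj (hζ.norm_pow_eq_one t.pos.ne' _)]
  exact hζ.sum_pow_mul_inv_pow t s

theorem sum_norm_sq_sum_mul_pow {ζ : ℂ} (hζ : IsPrimitiveRoot ζ N) (M : Finset (Fin N))
    (a : Fin N → ℂ) :
    ∑ k : Fin N, ‖∑ t ∈ M, a t * ζ ^ ((k : ℕ) * t)‖ ^ 2 = N * ∑ t ∈ M, ‖a t‖ ^ 2 := by
  apply ofReal_injective
  push_cast
  simp_rw [← mul_conj', map_sum, map_mul, sum_mul_sum, mul_sum]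
  calc ∑ k : Fin N, ∑ t ∈ M, ∑ s ∈ M,
        a t * ζ ^ ((k : ℕ) * t) * (conj (a s) * conj (ζ ^ ((k : ℕ) * s)))
    _ = ∑ t ∈ M, ∑ s ∈ M, a t * conj (a s) *
          ∑ k : Fin N, ζ ^ ((k : ℕ) * t) * conj (ζ ^ ((k : ℕ) * s)) := by
      rw [sum_comm]
      refine sum_congr rfl fun t _ => ?_
      rw [sum_comm]
      simp_rw [mul_sum]
      refine sum_congr rfl fun s _ => sum_congr rfl fun k _ => by ring
    _ = _ := by
      simp_rw [hζ.sum_pow_mul_conj_pow, mul_ite, mul_zero, sum_ite_eq]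
      exact sum_congr rfl fun t ht => by rw [if_pos ht, mul_comm]

end IsPrimitiveRoot

section DFTRows

variable {N : ℕ} {ζ : ℂ} {c : ℂ} {φ : Fin N → Fin N → ℂ}

theorem sum_norm_sq_inner_of_eq_mul_pow (hζ : IsPrimitiveRoot ζ N)
    (hφ : ∀ j t, φ j t = c * ζ ^ ((j : ℕ) * t)) (M : Finset (Fin N)) (j : Fin N) :
    ∑ k : Fin N, ‖∑ t ∈ M, conj (φ j t) * φ k t‖ ^ 2 = N * #M * ‖c‖ ^ 4 := by
  simp_rw [hφ _, ← mul_assoc, hζ.sum_norm_sq_sum_mul_pow, norm_mul, Complex.norm_conj,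
    norm_mul, hζ.norm_pow_eq_one j.pos.ne', sum_const, nsmul_eq_mul]
  ring

theorem norm_sq_inner_self_of_eq_mul_pow (hζ : IsPrimitiveRoot ζ N)
    (hφ : ∀ j t, φ j t = c * ζ ^ ((j : ℕ) * t)) (M : Finset (Fin N)) (j : Fin N) :
    ‖∑ t ∈ M, conj (φ j t) * φ j t‖ ^ 2 = (#M : ℝ) ^ 2 * ‖c‖ ^ 4 := by
  simp_rw [conj_mul', hφ j, norm_mul, hζ.norm_pow_eq_one j.pos.ne', mul_one, sum_const,
    nsmul_eq_mul]
  simp only [norm_mul, norm_natCast, norm_pow, norm_real, norm_norm]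
  ring

theorem sum_offDiag_norm_sq_inner_of_eq_mul_pow (hζ : IsPrimitiveRoot ζ N)
    (hφ : ∀ j t, φ j t = c * ζ ^ ((j : ℕ) * t)) (M : Finset (Fin N)) :
    ∑ p ∈ (univ : Finset (Fin N)).offDiag, ‖∑ t ∈ M, conj (φ p.1 t) * φ p.2 t‖ ^ 2 =
      N * #M * (N - #M) * ‖c‖ ^ 4 := by
  rw [sum_offDiag_eq_sum_sum_sub_sum_diag]
  simp only [sum_norm_sq_inner_of_eq_mul_pow hζ hφ, norm_sq_inner_self_of_eq_mul_pow hζ hφ,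
    sum_const, card_univ, Fintype.card_fin, nsmul_eq_mul]
  ring

end DFTRows

theorem exp_two_pi_I_mul_mul_div_eq_pow (N a b : ℕ) :
    exp (2 * Real.pi * I * a * b / N) = exp (2 * Real.pi * I / N) ^ (a * b) := by
  rw [← exp_nat_mul]
  congr 1
  push_cast
  ring

/-- For the normalized row-submatrix `Φ = √(N/|M|) F_M` of the `N × N` DFT matrix
(with `M` a nonempty proper subset of rows), the mean square coherence equals
`(N - |M|)/((N-1)|M|)`. -/
theorem stmt_6 (N : ℕ) (hN : 0 < N) (M : Finset (Fin N)) (hM : M.Nonempty)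
    (hMproper : M ≠ Finset.univ)
    (φ : Fin N → Fin N → ℂ)
    (hφ : ∀ j t, φ j t = (Real.sqrt ((N : ℝ) / M.card) : ℂ) *
      (Complex.exp (2 * Real.pi * Complex.I * (j : ℕ) * (t : ℕ) / N) / (Real.sqrt N : ℂ))) :
    (1 / ((N : ℝ) * ((N : ℝ) - 1))) *
        ∑ p ∈ (Finset.univ : Finset (Fin N)).offDiag,
          (‖∑ t ∈ M, starRingEnd ℂ (φ p.1 t) * φ p.2 t‖) ^ 2
      = ((N : ℝ) - M.card) / (((N : ℝ) - 1) * M.card) := by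
  set c : ℂ := (Real.sqrt ((N : ℝ) / #M) : ℂ) / (Real.sqrt N : ℂ)
  have hφ' (j t : Fin N) : φ j t = c * exp (2 * Real.pi * I / N) ^ ((j : ℕ) * t) := by
    rw [hφ, exp_two_pi_I_mul_mul_div_eq_pow]
    ring
  have hc : ‖c‖ ^ 2 = 1 / #M := by
    rw [norm_div, norm_real, norm_real, div_pow, Real.norm_eq_abs, Real.norm_eq_abs, sq_abs, sq_abs,
      Real.sq_sqrt (by positivity), Real.sq_sqrt (by positivity)]
    field_simp
  have hm : (1 : ℝ) ≤ #M := by exact_mod_cast hM.card_pos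
  have hmN : (#M : ℝ) < N := by
    simpa using (card_lt_iff_ne_univ M).mpr hMproper
  rw [sum_offDiag_norm_sq_inner_of_eq_mul_pow (isPrimitiveRoot_exp N hN.ne') hφ',
    show ‖c‖ ^ 4 = (‖c‖ ^ 2) ^ 2 by ring, hc]
  have hN1 : (N : ℝ) - 1 ≠ 0 := by linarith
  field_simp
end

section
/- Fix j ∈ [N] and let I_j = {i_1,…,i_k} be a uniformly random k-subset of [N]\{j} (with a uniform random ordering). Define Y_{j,l} = ⟨φ_j, φ_{i_l}⟩² and Z_t = E[∑_{l=1}^k Y_{j,l} | Y_{j,1},…,Y_{j,t}] for t = 0,…,k. Then (Z_t) is a martingale with respect to the natural filtration, and |Z_t - Z_{t-1}| ≤ 2μ²(N-2)/(N-k-2) for each t = 1,…,k, where μ is the mutual coherence of Φ. -/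
/-!
`Z` is a Doob martingale, so the martingale property is general theory; the content is the
increment bound. Conditionally on the first `t` draws, every later draw is uniform on the
`N - 1 - t` indices not used so far (swapping two unused indices is a bijection of the event
"the first `t` draws are given"). Hence, with `S_t` the sum of the first `t` squared coherences
and `T = ∑_{i ≠ j} ⟨φ_j, φ_i⟩²`, explicitly `Z_t = S_t + (k - t) (T - S_t) / (N - 1 - t)`.
Revealing draw `t + 1`, of value `y`, changes this by `(A - K) / (A + 1) · (y - R / A)` with
`A = N - 2 - t`, `K = k - t - 1`, `R = T - S_{t+1}`; the factor lies in `[0, 1]` and `y`, `R / A`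
both lie in `[0, μ²]`, so `|Z_{t+1} - Z_t| ≤ μ²`, which is below the stated bound.
-/

open MeasureTheory

/-- The sample space: ordered `k`-tuples of distinct indices from `[N] \ {j}`. -/
abbrev Tuples (N k : ℕ) (j : Fin N) : Type :=
  {f : Fin k → Fin N // Function.Injective f ∧ ∀ l, f l ≠ j}

noncomputable instance (N k : ℕ) (j : Fin N) : Fintype (Tuples N k j) :=
  Fintype.ofFinite _

instance (N k : ℕ) (j : Fin N) : MeasurableSpace (Tuples N k j) := ⊤

noncomputable def uniformTuples (N k : ℕ) (j : Fin N) : Measure (Tuples N k j) :=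
  ((Fintype.card (Tuples N k j) : ENNReal))⁻¹ • Measure.count

/-- The natural filtration generated by `Y_1, …, Y_t`. -/
noncomputable def natFilt {Ω : Type*} (k : ℕ) (Y : Fin k → Ω → ℝ) :
    Filtration ℕ (⊤ : MeasurableSpace Ω) where
  seq n := ⨆ l : Fin k, ⨆ _ : (l : ℕ) < n, MeasurableSpace.comap (Y l) inferInstance
  mono' := by
    intro a b hab
    refine iSup_mono fun l => ?_
    exact iSup_le fun hl => le_iSup (fun _ : (l : ℕ) < b =>
      MeasurableSpace.comap (Y l) inferInstance) (lt_of_lt_of_le hl hab)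
  le' := fun _ => le_top

open Finset

theorem ae_eq_condExp_of_forall_sum_fiber_eq {Ω β : Type*} [Fintype Ω]
    {m mΩ : MeasurableSpace Ω} [MeasurableSingletonClass Ω] [DecidableEq β] {μ : Measure Ω}
    [IsFiniteMeasure μ] {π : Ω → β} (hπ : m ≤ MeasurableSpace.comap π ⊤) {g F : Ω → ℝ}
    (hg : StronglyMeasurable[m] g)
    (hfiber : ∀ ω₀, ∑ ω with π ω = π ω₀, μ.real {ω} * g ω
      = ∑ ω with π ω = π ω₀, μ.real {ω} * F ω) :
    g =ᵐ[μ] μ[F|m] := by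
  have hm : m ≤ mΩ := fun s _ => s.toFinite.measurableSet
  refine ae_eq_condExp_of_forall_setIntegral_eq hm .of_finite
    (fun _ _ _ => Integrable.of_finite.integrableOn) (fun s hs _ => ?_) hg.aestronglyMeasurable
  obtain ⟨B, -, rfl⟩ := hπ s hs
  classical
  have hsum (h : Ω → ℝ) : ∫ ω in π ⁻¹' B, h ω ∂μ
      = ∑ b ∈ univ.image π, if b ∈ B then ∑ ω with π ω = b, μ.real {ω} * h ω else 0 := by
    rw [← integral_indicator (Set.toFinite _).measurableSet, integral_fintype .of_finite,
      ← sum_fiberwise_of_maps_to fun ω _ => mem_image_of_mem π (mem_univ ω)]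
    refine sum_congr rfl fun b _ => ?_
    split_ifs with hb
    · refine sum_congr rfl fun ω hω => ?_
      rw [Set.indicator_of_mem (by simpa [(mem_filter.mp hω).2] using hb), smul_eq_mul]
    · refine sum_eq_zero fun ω hω => ?_
      rw [Set.indicator_of_notMem (by simpa [(mem_filter.mp hω).2] using hb), smul_zero]
  rw [hsum, hsum]
  refine sum_congr rfl fun b hb => ?_
  obtain ⟨ω₀, -, rfl⟩ := mem_image.mp hb
  rw [hfiber ω₀]

theorem abs_add_mul_div_sub_mul_div_le {y R K A m : ℝ} (hA : 0 < A) (hK0 : 0 ≤ K) (hKA : K ≤ A)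
    (hy0 : 0 ≤ y) (hym : y ≤ m) (hR0 : 0 ≤ R) (hRm : R ≤ A * m) :
    |y + K * R / A - (K + 1) * (R + y) / (A + 1)| ≤ m := by
  have hidentity :
      y + K * R / A - (K + 1) * (R + y) / (A + 1) = (A - K) / (A + 1) * (y - R / A) := by
    field_simp
    ring
  have hcoeff : |(A - K) / (A + 1)| ≤ 1 := by
    rw [abs_of_nonneg (by positivity), div_le_one (by positivity)]
    linarith
  have hRA : R / A ≤ m := (div_le_iff₀ hA).mpr (by linarith)
  have hgap : |y - R / A| ≤ m := abs_sub_le_of_nonneg_of_le hy0 hym (by positivity) hRA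
  rw [hidentity, abs_mul]
  nlinarith [abs_nonneg (y - R / A)]

namespace Tuples

variable {N k : ℕ} {j : Fin N}

theorem nonempty (hk : k < N) : Nonempty (Tuples N k j) := by
  have : Fintype.card (Fin k) ≤ Fintype.card {i : Fin N // i ≠ j} := by
    simp only [Fintype.card_fin, ne_eq, Fintype.card_subtype_compl, Fintype.card_unique]
    omega
  obtain ⟨e⟩ := Function.Embedding.nonempty_of_card_le this
  exact ⟨⟨fun l => e l, fun a b h => e.injective (Subtype.ext h), fun l => (e l).2⟩⟩

theorem uniformTuples_eq_uniformOn :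
    uniformTuples N k j = ProbabilityTheory.uniformOn Set.univ := by
  ext s -
  rw [ProbabilityTheory.uniformOn_univ, uniformTuples, Measure.smul_apply, smul_eq_mul,
    ENNReal.div_eq_inv_mul]

theorem isProbabilityMeasure_uniformTuples (hk : k < N) :
    IsProbabilityMeasure (uniformTuples N k j) := by
  have := nonempty (j := j) hk
  rw [uniformTuples_eq_uniformOn]
  infer_instance

theorem measureReal_uniformTuples_singleton (ω : Tuples N k j) :
    (uniformTuples N k j).real {ω} = (Fintype.card (Tuples N k j) : ℝ)⁻¹ := by
  simp [uniformTuples, measureReal_def]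

def take (t : ℕ) (ω : Tuples N k j) : {l : Fin k // (l : ℕ) < t} → Fin N := fun l => ω.1 l

theorem take_eq_take_iff {t : ℕ} {ω ω' : Tuples N k j} :
    take t ω = take t ω' ↔ ∀ l : Fin k, (l : ℕ) < t → ω.1 l = ω'.1 l := by
  simp [funext_iff, take]

def partialSum (f : Fin N → ℝ) (t : ℕ) (ω : Tuples N k j) : ℝ :=
  ∑ l : Fin k with l.val < t, f (ω.1 l)

def unused (t : ℕ) (ω : Tuples N k j) : Finset (Fin N) :=
  univ.erase j \ ({l | l.val < t} : Finset (Fin k)).image ω.1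

theorem image_take_subset (t : ℕ) (ω : Tuples N k j) :
    ({l | l.val < t} : Finset (Fin k)).image ω.1 ⊆ univ.erase j := fun x hx => by
  obtain ⟨l, -, rfl⟩ := mem_image.mp hx
  exact mem_erase.mpr ⟨ω.2.2 l, mem_univ _⟩

theorem mem_unused_iff {t : ℕ} {ω : Tuples N k j} {x : Fin N} :
    x ∈ unused t ω ↔ x ≠ j ∧ ∀ l : Fin k, (l : ℕ) < t → ω.1 l ≠ x := by
  simp [unused]

theorem sum_unused (f : Fin N → ℝ) (t : ℕ) (ω : Tuples N k j) :
    ∑ i ∈ unused t ω, f i = ∑ i ∈ univ.erase j, f i - partialSum f t ω := by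
  rw [unused, sum_sdiff_eq_sub (image_take_subset t ω), sum_image fun a _ b _ h => ω.2.1 h,
    partialSum]

theorem card_unused {t : ℕ} (ht : t ≤ k) (ω : Tuples N k j) : #(unused t ω) = N - 1 - t := by
  rw [unused, card_sdiff_of_subset (image_take_subset t ω), card_erase_of_mem (mem_univ j),
    card_univ, Fintype.card_fin, card_image_of_injective _ ω.2.1, Fin.card_filter_val_lt,
    min_eq_right ht]

theorem cast_card_unused {t : ℕ} (ht : t ≤ k) (hk : k < N) (ω : Tuples N k j) :
    (#(unused t ω) : ℝ) = N - 1 - t := by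
  rw [card_unused ht, Nat.cast_sub (by omega), Nat.cast_sub (by omega), Nat.cast_one]

theorem unused_congr {t : ℕ} {ω ω' : Tuples N k j} (h : take t ω = take t ω') :
    unused t ω = unused t ω' := by
  ext x
  simp only [mem_unused_iff]
  exact and_congr_right fun _ => forall₂_congr fun l hl => by rw [take_eq_take_iff.mp h l hl]

theorem partialSum_congr (f : Fin N → ℝ) {t : ℕ} {ω ω' : Tuples N k j}
    (h : take t ω = take t ω') :
    partialSum f t ω = partialSum f t ω' :=
  sum_congr rfl fun l hl => by rw [take_eq_take_iff.mp h l (mem_filter.mp hl).2]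

noncomputable def fiber (t : ℕ) (ω₀ : Tuples N k j) : Finset (Tuples N k j) :=
  {ω | take t ω = take t ω₀}

theorem mem_fiber {t : ℕ} {ω ω₀ : Tuples N k j} : ω ∈ fiber t ω₀ ↔ take t ω = take t ω₀ := by
  simp [fiber]

def swap (x x' : Fin N) (hx : x ≠ j) (hx' : x' ≠ j) (ω : Tuples N k j) : Tuples N k j :=
  ⟨Equiv.swap x x' ∘ ω.1, (Equiv.swap x x').injective.comp ω.2.1, fun l h => ω.2.2 l <|
    (Equiv.swap x x').injective (h.trans (Equiv.swap_apply_of_ne_of_ne hx.symm hx'.symm).symm)⟩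

theorem swap_apply (x x' : Fin N) (hx : x ≠ j) (hx' : x' ≠ j) (ω : Tuples N k j) (l : Fin k) :
    (swap x x' hx hx' ω).1 l = Equiv.swap x x' (ω.1 l) := rfl

theorem swap_swap (x x' : Fin N) (hx : x ≠ j) (hx' : x' ≠ j) (ω : Tuples N k j) :
    swap x x' hx hx' (swap x x' hx hx' ω) = ω :=
  Subtype.ext <| funext fun l => Equiv.swap_apply_self x x' (ω.1 l)

theorem take_swap {t : ℕ} {x x' : Fin N} (hx : x ≠ j) (hx' : x' ≠ j) {ω : Tuples N k j}
    (hxω : x ∈ unused t ω) (hx'ω : x' ∈ unused t ω) : take t (swap x x' hx hx' ω) = take t ω :=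
  take_eq_take_iff.mpr fun l hl => Equiv.swap_apply_of_ne_of_ne
    ((mem_unused_iff.mp hxω).2 l hl) ((mem_unused_iff.mp hx'ω).2 l hl)

/-- Swapping two unused indices is a bijection between the two events. -/
theorem card_fiber_filter_apply_eq {t : ℕ} {ω₀ : Tuples N k j} (l : Fin k) {x x' : Fin N}
    (hx : x ∈ unused t ω₀) (hx' : x' ∈ unused t ω₀) :
    #{ω ∈ fiber t ω₀ | ω.1 l = x} = #{ω ∈ fiber t ω₀ | ω.1 l = x'} := by
  have hxj := (mem_unused_iff.mp hx).1
  have hx'j := (mem_unused_iff.mp hx').1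
  have hmaps {y : Fin N} {ω : Tuples N k j} (hω : ω ∈ {ω ∈ fiber t ω₀ | ω.1 l = y}) :
      swap x x' hxj hx'j ω ∈ {ω ∈ fiber t ω₀ | ω.1 l = Equiv.swap x x' y} := by
    rw [mem_filter, mem_fiber] at hω ⊢
    rw [← unused_congr hω.1] at hx hx'
    rw [take_swap hxj hx'j hx hx', swap_apply, hω.1, hω.2]
    exact ⟨rfl, rfl⟩
  refine card_nbij' (swap x x' hxj hx'j) (swap x x' hxj hx'j) (fun ω hω => ?_) (fun ω hω => ?_)
    (fun ω _ => swap_swap ..) (fun ω _ => swap_swap ..)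
  · simpa only [mem_coe, Equiv.swap_apply_left] using hmaps (mem_coe.mp hω)
  · simpa only [mem_coe, Equiv.swap_apply_right] using hmaps (mem_coe.mp hω)

theorem apply_mem_unused {t : ℕ} (ω : Tuples N k j) {l : Fin k} (hl : t ≤ l) :
    ω.1 l ∈ unused t ω :=
  mem_unused_iff.mpr ⟨ω.2.2 l, fun l' hl' h => by have := ω.2.1 h; omega⟩

theorem card_unused_mul_sum_fiber {t : ℕ} (ω₀ : Tuples N k j) {l : Fin k} (hl : t ≤ l)
    (f : Fin N → ℝ) :
    #(unused t ω₀) * ∑ ω ∈ fiber t ω₀, f (ω.1 l) = #(fiber t ω₀) * ∑ x ∈ unused t ω₀, f x := by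
  have hmaps : ∀ ω ∈ fiber t ω₀, ω.1 l ∈ unused t ω₀ := fun ω hω =>
    unused_congr (mem_fiber.mp hω) ▸ apply_mem_unused ω hl
  obtain hU | ⟨x₀, hx₀⟩ := (unused t ω₀).eq_empty_or_nonempty
  · simp [hU]
  have hc : ∀ x ∈ unused t ω₀, #{ω ∈ fiber t ω₀ | ω.1 l = x} = #{ω ∈ fiber t ω₀ | ω.1 l = x₀} :=
    fun x hx => card_fiber_filter_apply_eq l hx hx₀
  have hsum : ∑ ω ∈ fiber t ω₀, f (ω.1 l)
      = #{ω ∈ fiber t ω₀ | ω.1 l = x₀} * ∑ x ∈ unused t ω₀, f x := by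
    rw [← sum_fiberwise_of_maps_to hmaps, mul_sum]
    refine sum_congr rfl fun x hx => ?_
    rw [sum_congr rfl fun ω hω => by rw [(mem_filter.mp hω).2], sum_const, nsmul_eq_mul, hc x hx]
  rw [hsum, card_eq_sum_card_fiberwise hmaps, sum_congr rfl hc, sum_const, nsmul_eq_mul]
  push_cast
  ring

/-- The conditional mean of `∑ l, f (ω l)` given the first `t` entries: each of the `k - t`
remaining slots contributes the average of `f` over the `N - 1 - t` unused indices. -/
noncomputable def expectedSum (f : Fin N → ℝ) (t : ℕ) (ω : Tuples N k j) : ℝ :=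
  partialSum f t ω + (k - t) * (∑ i ∈ univ.erase j, f i - partialSum f t ω) / (N - 1 - t)

theorem sum_fiber_sum_eq_sum_fiber_expectedSum (hk : k < N) {t : ℕ} (ht : t ≤ k)
    (f : Fin N → ℝ) (ω₀ : Tuples N k j) :
    ∑ ω ∈ fiber t ω₀, ∑ l, f (ω.1 l) = ∑ ω ∈ fiber t ω₀, expectedSum f t ω := by
  have hS : ∀ ω ∈ fiber t ω₀, partialSum f t ω = partialSum f t ω₀ := fun ω hω =>
    partialSum_congr f (mem_fiber.mp hω)
  have hE : ∀ ω ∈ fiber t ω₀, expectedSum f t ω = expectedSum f t ω₀ := fun ω hω => by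
    rw [expectedSum, expectedSum, hS ω hω]
  have hlate : ∀ l ∈ ({l | ¬ l.val < t} : Finset (Fin k)), ∑ ω ∈ fiber t ω₀, f (ω.1 l)
      = #(fiber t ω₀) * (∑ i ∈ univ.erase j, f i - partialSum f t ω₀) / (N - 1 - t) := by
    intro l hl
    have htl : t ≤ l := not_lt.mp (mem_filter.mp hl).2
    have hpos : (0 : ℝ) < N - 1 - t := by
      have : (t : ℝ) + 1 < N := by exact_mod_cast (by omega : t + 1 < N)
      linarith
    rw [eq_div_iff hpos.ne', ← sum_unused, ← cast_card_unused ht hk ω₀, mul_comm,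
      card_unused_mul_sum_fiber ω₀ htl]
  have hcard : #({l | ¬ l.val < t} : Finset (Fin k)) = k - t := by
    rw [filter_not, card_sdiff_of_subset (filter_subset _ _), Fin.card_filter_val_lt, card_univ,
      Fintype.card_fin, min_eq_right ht]
  calc ∑ ω ∈ fiber t ω₀, ∑ l, f (ω.1 l)
      = ∑ ω ∈ fiber t ω₀, (partialSum f t ω + ∑ l : Fin k with ¬ l.val < t, f (ω.1 l)) :=
        sum_congr rfl fun ω _ => (sum_filter_add_sum_filter_not _ _ _).symm
    _ = #(fiber t ω₀) * partialSum f t ω₀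
          + ∑ l : Fin k with ¬ l.val < t, ∑ ω ∈ fiber t ω₀, f (ω.1 l) := by
        rw [sum_add_distrib, sum_congr rfl hS, sum_const, nsmul_eq_mul, sum_comm]
    _ = ∑ ω ∈ fiber t ω₀, expectedSum f t ω := by
        rw [sum_congr rfl hlate, sum_congr rfl hE, sum_const, sum_const, hcard, nsmul_eq_mul,
          nsmul_eq_mul, Nat.cast_sub ht, expectedSum]
        ring

instance : MeasurableSingletonClass (Tuples N k j) := ⟨fun _ => trivial⟩

theorem natFilt_le_comap_take {f : Fin N → ℝ} {Y : Fin k → Tuples N k j → ℝ}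
    (hY : ∀ l ω, Y l ω = f (ω.1 l)) (t : ℕ) :
    natFilt k Y t ≤ MeasurableSpace.comap (take t) ⊤ := by
  refine iSup₂_le fun l hl => ?_
  have : Y l = (fun p => f (p ⟨l, hl⟩)) ∘ take t := funext (hY l)
  rw [this, ← MeasurableSpace.comap_comp]
  exact MeasurableSpace.comap_mono le_top

theorem measurable_partialSum {f : Fin N → ℝ} {Y : Fin k → Tuples N k j → ℝ}
    (hY : ∀ l ω, Y l ω = f (ω.1 l)) (t : ℕ) : Measurable[natFilt k Y t] (partialSum f t) := by
  have : partialSum f t = fun ω => ∑ l : Fin k with l.val < t, Y l ω := by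
    ext ω
    simp [partialSum, hY]
  rw [this]
  exact Finset.measurable_sum _ fun l hl => Measurable.of_comap_le <|
    le_iSup₂ (f := fun (l : Fin k) (_ : (l : ℕ) < t) => MeasurableSpace.comap (Y l) inferInstance)
      l (mem_filter.mp hl).2

theorem expectedSum_ae_eq_condExp (hk : k < N) {t : ℕ} (ht : t ≤ k) {f : Fin N → ℝ}
    {Y : Fin k → Tuples N k j → ℝ} (hY : ∀ l ω, Y l ω = f (ω.1 l)) :
    expectedSum f t =ᵐ[uniformTuples N k j]
      (uniformTuples N k j)[fun ω => ∑ l, Y l ω | natFilt k Y t] := by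
  have := isProbabilityMeasure_uniformTuples (j := j) hk
  have hmeas : Measurable[natFilt k Y t] (expectedSum f t) := by
    have := measurable_partialSum hY t
    unfold expectedSum
    fun_prop
  refine ae_eq_condExp_of_forall_sum_fiber_eq (natFilt_le_comap_take hY t)
    hmeas.stronglyMeasurable fun ω₀ => ?_
  simp only [measureReal_uniformTuples_singleton, ← mul_sum, hY]
  exact congrArg _ (sum_fiber_sum_eq_sum_fiber_expectedSum hk ht f ω₀).symm

theorem partialSum_succ (f : Fin N → ℝ) {t : ℕ} (ht : t < k) (ω : Tuples N k j) :
    partialSum f (t + 1) ω = partialSum f t ω + f (ω.1 ⟨t, ht⟩) := by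
  have : ({l | l.val < t + 1} : Finset (Fin k))
      = insert (⟨t, ht⟩ : Fin k) ({l | l.val < t} : Finset (Fin k)) := by
    ext l
    simp only [Order.lt_add_one_iff, mem_filter, mem_univ, true_and, mem_insert, Fin.ext_iff]
    omega
  rw [partialSum, partialSum, this, sum_insert (by simp), add_comm]

theorem sum_erase_sub_partialSum_mem_Icc (hk : k < N) {t : ℕ} (ht : t ≤ k) {f : Fin N → ℝ}
    {m : ℝ} (hf0 : ∀ i, 0 ≤ f i) (hfm : ∀ i, i ≠ j → f i ≤ m) (ω : Tuples N k j) :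
    ∑ i ∈ univ.erase j, f i - partialSum f t ω ∈ Set.Icc 0 ((N - 1 - t) * m) := by
  rw [← sum_unused, ← cast_card_unused ht hk ω, ← nsmul_eq_mul]
  exact ⟨sum_nonneg fun i _ => hf0 i,
    sum_le_card_nsmul _ _ _ fun i hi => hfm i (mem_unused_iff.mp hi).1⟩

theorem abs_expectedSum_succ_sub_le (hk : k + 1 < N) {t : ℕ} (ht : t < k) {f : Fin N → ℝ}
    {m : ℝ} (hf0 : ∀ i, 0 ≤ f i) (hfm : ∀ i, i ≠ j → f i ≤ m) (ω : Tuples N k j) :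
    |expectedSum f (t + 1) ω - expectedSum f t ω| ≤ m := by
  obtain ⟨hR0, hRm⟩ := sum_erase_sub_partialSum_mem_Icc (t := t + 1) (by omega) ht hf0 hfm ω
  push_cast at hRm
  have ht' : (t : ℝ) + 1 ≤ k := by exact_mod_cast ht
  have hN : (k : ℝ) + 1 < N := by exact_mod_cast hk
  have := abs_add_mul_div_sub_mul_div_le (K := k - (t + 1)) (A := N - 1 - (t + 1))
    (by linarith) (by linarith) (by linarith) (hf0 _) (hfm _ (ω.2.2 ⟨t, ht⟩)) hR0 hRm
  convert this using 2
  simp only [expectedSum, partialSum_succ f ht]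
  push_cast
  ring

end Tuples

theorem stmt_10_general (n N k : ℕ) (hk2 : k + 2 < N) (j : Fin N)
    (φ : Fin N → Fin n → ℝ)
    (μc : ℝ)
    (hμ_ub : ∀ i l : Fin N, i ≠ l → |∑ t, φ i t * φ l t| ≤ μc)
    (Y : Fin k → Tuples N k j → ℝ)
    (hY : ∀ l ω, Y l ω = (∑ t, φ j t * φ (ω.val l) t) ^ 2)
    (Z : ℕ → Tuples N k j → ℝ)
    (hZ : ∀ t, Z t =
      condExp ((natFilt k Y) t) (uniformTuples N k j) (fun ω => ∑ l, Y l ω)) :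
    Martingale Z (natFilt k Y) (uniformTuples N k j) ∧
    ∀ t : ℕ, 1 ≤ t → t ≤ k →
      ∀ᵐ ω ∂(uniformTuples N k j),
        |Z t ω - Z (t - 1) ω| ≤ 2 * μc ^ 2 * ((N : ℝ) - 2) / ((N : ℝ) - k - 2) := by
  have := Tuples.isProbabilityMeasure_uniformTuples (j := j) (by omega : k < N)
  refine ⟨funext hZ ▸ martingale_condExp _ _ _, fun t ht1 htk => ?_⟩
  obtain ⟨t, rfl⟩ : ∃ s, t = s + 1 := ⟨t - 1, by omega⟩
  set f : Fin N → ℝ := fun i => (∑ s, φ j s * φ i s) ^ 2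
  have hYf : ∀ l ω, Y l ω = f (ω.1 l) := hY
  have hfm : ∀ i, i ≠ j → f i ≤ μc ^ 2 := fun i hi =>
    sq_le_sq' (abs_le.mp (hμ_ub j i hi.symm)).1 (abs_le.mp (hμ_ub j i hi.symm)).2
  filter_upwards [Tuples.expectedSum_ae_eq_condExp (by omega) htk hYf,
    Tuples.expectedSum_ae_eq_condExp (t := t) (by omega) (by omega) hYf] with ω hsucc hcurr
  rw [hZ, hZ, Nat.add_sub_cancel, ← hsucc, ← hcurr]
  have hden : (0 : ℝ) < N - k - 2 := by
    have : (k : ℝ) + 2 < N := by exact_mod_cast hk2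
    linarith
  calc _ ≤ μc ^ 2 :=
        Tuples.abs_expectedSum_succ_sub_le (by omega) (by omega) (fun _ => sq_nonneg _) hfm ω
    _ ≤ _ := by
        rw [le_div_iff₀ hden]
        nlinarith [sq_nonneg μc]

/-- The Doob martingale `Z_t = E[∑_l Y_l | Y_1,…,Y_t]` of squared coherences with a
fixed column `j` over a uniformly random ordered `k`-tuple avoiding `j` is a
martingale with differences bounded by `2μ²(N-2)/(N-k-2)`. -/
theorem stmt_10 (n N k : ℕ) (hk2 : k + 2 < N) (hk1 : 1 ≤ k) (j : Fin N)
    (φ : Fin N → Fin n → ℝ) (hcol : ∀ i, ∑ t, φ i t ^ 2 = 1)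
    (μc : ℝ) (hμc : 0 ≤ μc)
    (hμ_ub : ∀ i l : Fin N, i ≠ l → |∑ t, φ i t * φ l t| ≤ μc)
    (Y : Fin k → Tuples N k j → ℝ)
    (hY : ∀ l ω, Y l ω = (∑ t, φ j t * φ (ω.val l) t) ^ 2)
    (Z : ℕ → Tuples N k j → ℝ)
    (hZ : ∀ t, Z t =
      condExp ((natFilt k Y) t) (uniformTuples N k j) (fun ω => ∑ l, Y l ω)) :
    Martingale Z (natFilt k Y) (uniformTuples N k j) ∧
    ∀ t : ℕ, 1 ≤ t → t ≤ k →
      ∀ᵐ ω ∂(uniformTuples N k j),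
        |Z t ω - Z (t - 1) ω| ≤ 2 * μc ^ 2 * ((N : ℝ) - 2) / ((N : ℝ) - k - 2) :=
  stmt_10_general n N k hk2 j φ μc hμ_ub Y hY Z hZ
end

section
/- Let Φ be an m×N matrix with unit-norm columns, mutual coherence μ and mean square coherence μ̄². Let 0 < a < 1, β > 0, 0 < ε < 1, and suppose k < N/2 - 1, μ⁴ ≤ (1-a)²β²/(32 k (log(2N/ε))³), and k μ̄² ≤ aβ/log(2N/ε). Then for a uniformly random k-subset I ⊆ [N], P(max_{i∉I} ‖Φ_Iᵀ φ_i‖₂² ≥ β/log(2N/ε)) ≤ ε. -/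
/-!
Let `τ = β / log (2N/ε)`. Fix a column `i` and put `x l = ⟨φ l, φ i⟩² ∈ [0, μ²]` for `l ≠ i`; by
the mean square coherence these numbers have mean at most `μ̄²`. The exponential Markov inequality
bounds the number of `k`-subsets `I` with `∑ l ∈ I, x l ≥ τ` by `exp (-t τ)` times the elementary
symmetric sum `e_k` of the `exp (t x l)`, and Maclaurin's inequality `e_k / C(n, k) ≤ (e_1 / n) ^ k`
says that sampling without replacement is no worse than sampling with replacement. Since
`exp (t x) ≤ 1 + t x exp (t μ²)` on `[0, μ²]`, this gives the Chernoff bound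
`C(n, k) exp (t (k exp (t μ²) μ̄² - τ))`, and for `t = (1 - a) / (4 μ²)` the coherence hypotheses
make the exponent at most `-log (2N/ε)`. A union bound over `i` costs a factor `N`. When
`k μ² < τ` the event is empty.
-/

open Finset

namespace Finset

variable {ι R : Type*}

noncomputable def esymm [CommSemiring R] (s : Finset ι) (y : ι → R) (r : ℕ) : R :=
  (s.val.map y).esymm r

lemma esymm_eq_sum [CommSemiring R] (s : Finset ι) (y : ι → R) (r : ℕ) :
    s.esymm y r = ∑ J ∈ s.powersetCard r, ∏ l ∈ J, y l :=
  esymm_map_val y s r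

@[simp] lemma esymm_zero [CommSemiring R] (s : Finset ι) (y : ι → R) : s.esymm y 0 = 1 := by
  simp [esymm_eq_sum]

lemma esymm_one [CommSemiring R] (s : Finset ι) (y : ι → R) : s.esymm y 1 = ∑ l ∈ s, y l := by
  simp [esymm_eq_sum, powersetCard_one]

lemma esymm_nonneg [CommSemiring R] [PartialOrder R] [IsOrderedRing R] {s : Finset ι}
    {y : ι → R} (hy : ∀ l ∈ s, 0 ≤ y l) (r : ℕ) : 0 ≤ s.esymm y r := by
  rw [esymm_eq_sum]
  exact sum_nonneg fun _ hJ => prod_nonneg fun l hl => hy l ((mem_powersetCard.mp hJ).1 hl)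

section CommRing

variable [CommRing R] [DecidableEq ι] {s : Finset ι} {y : ι → R}

lemma esymm_insert {a : ι} (ha : a ∉ s) (r : ℕ) :
    (insert a s).esymm y (r + 1) = s.esymm y (r + 1) + y a * s.esymm y r := by
  have hinj : Set.InjOn (insert a) (s.powersetCard r : Set (Finset ι)) := fun J hJ K hK h => by
    have haJ : a ∉ J := fun h' => ha ((mem_powersetCard.mp hJ).1 h')
    have haK : a ∉ K := fun h' => ha ((mem_powersetCard.mp hK).1 h')
    simpa [erase_insert haJ, erase_insert haK] using congrArg (·.erase a) h
  have hdisj : Disjoint (s.powersetCard (r + 1)) ((s.powersetCard r).image (insert a)) := by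
    refine disjoint_right.mpr fun J hJ hJs => ?_
    obtain ⟨K, -, rfl⟩ := mem_image.mp hJ
    exact ha ((mem_powersetCard.mp hJs).1 (mem_insert_self a K))
  rw [esymm_eq_sum, powersetCard_succ_insert ha, sum_union hdisj, sum_image hinj, esymm_eq_sum,
    esymm_eq_sum, mul_sum]
  congr 1
  exact sum_congr rfl fun J hJ => prod_insert fun h => ha ((mem_powersetCard.mp hJ).1 h)

lemma esymm_eq_erase {l : ι} (hl : l ∈ s) (r : ℕ) :
    s.esymm y (r + 1) = (s.erase l).esymm y (r + 1) + y l * (s.erase l).esymm y r := by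
  simpa [insert_erase hl] using esymm_insert (y := y) (notMem_erase l s) r

lemma sum_powersetCard_filter_mem_prod {l : ι} (hl : l ∈ s) (r : ℕ) :
    ∑ J ∈ s.powersetCard (r + 1) with l ∈ J, ∏ i ∈ J, y i = y l * (s.erase l).esymm y r := by
  have hsplit := sum_filter_add_sum_filter_not (s.powersetCard (r + 1)) (l ∈ ·)
    (fun J => ∏ i ∈ J, y i)
  have hnot : {J ∈ s.powersetCard (r + 1) | l ∉ J} = (s.erase l).powersetCard (r + 1) := by
    ext J
    simp only [mem_filter, mem_powersetCard, subset_erase]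
    tauto
  rw [hnot, ← esymm_eq_sum, ← esymm_eq_sum, esymm_eq_erase hl] at hsplit
  linear_combination hsplit

lemma succ_mul_esymm (s : Finset ι) (y : ι → R) (r : ℕ) :
    (r + 1 : R) * s.esymm y (r + 1) = ∑ l ∈ s, y l * (s.erase l).esymm y r := by
  calc (r + 1 : R) * s.esymm y (r + 1)
      = ∑ J ∈ s.powersetCard (r + 1), ∑ _l ∈ J, ∏ i ∈ J, y i := by
        rw [esymm_eq_sum, mul_sum]
        refine sum_congr rfl fun J hJ => ?_
        rw [sum_const, (mem_powersetCard.mp hJ).2, nsmul_eq_mul]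
        push_cast
        ring
    _ = ∑ l ∈ s, ∑ J ∈ s.powersetCard (r + 1) with l ∈ J, ∏ i ∈ J, y i := by
        refine sum_comm' fun J l => ?_
        simp only [mem_filter, mem_powersetCard]
        exact ⟨fun ⟨hJ, hl⟩ => ⟨⟨hJ, hl⟩, hJ.1 hl⟩, fun ⟨⟨hJ, hl⟩, _⟩ => ⟨hJ, hl⟩⟩
    _ = ∑ l ∈ s, y l * (s.erase l).esymm y r :=
        sum_congr rfl fun l hl => sum_powersetCard_filter_mem_prod hl r

variable [LinearOrder R] [IsStrictOrderedRing R]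

lemma monovaryOn_mul_esymm_erase (hy : ∀ l ∈ s, 0 ≤ y l) (r : ℕ) :
    MonovaryOn y (fun l => y l * (s.erase l).esymm y r) s := by
  intro i hi j hj hlt
  by_contra! hle
  have hij : i ≠ j := by rintro rfl; exact lt_irrefl _ hlt
  refine hlt.not_ge ?_
  dsimp only
  cases r with
  | zero => simpa using hle.le
  | succ r =>
    have hi' : i ∈ s.erase j := mem_erase.mpr ⟨hij, hi⟩
    have hj' : j ∈ s.erase i := mem_erase.mpr ⟨hij.symm, hj⟩
    rw [esymm_eq_erase hj' r, esymm_eq_erase hi' r, erase_right_comm]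
    have hy' : ∀ l ∈ (s.erase i).erase j, 0 ≤ y l := fun l hl =>
      hy l (mem_of_mem_erase (mem_of_mem_erase hl))
    have hA := esymm_nonneg hy' (r + 1)
    have hB := esymm_nonneg hy' r
    nlinarith [hy i hi, hy j hj]

/-- A weak Newton inequality; the error term is controlled by Chebyshev's sum inequality. -/
lemma card_mul_succ_mul_esymm_le (hy : ∀ l ∈ s, 0 ≤ y l) (r : ℕ) :
    (#s : R) * ((r + 1) * s.esymm y (r + 1)) ≤ (#s - r) * ((∑ l ∈ s, y l) * s.esymm y r) := by
  cases r with
  | zero => norm_num [esymm_one]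
  | succ r =>
    have hrec := succ_mul_esymm s y (r + 1)
    have hterm : ∀ l ∈ s, y l * (s.erase l).esymm y (r + 1)
        = y l * s.esymm y (r + 1) - y l * (y l * (s.erase l).esymm y r) := fun l hl => by
      rw [esymm_eq_erase hl r]; ring
    rw [sum_congr rfl hterm, sum_sub_distrib, ← sum_mul] at hrec
    have hcheb := (monovaryOn_mul_esymm_erase hy r).sum_mul_sum_le_card_mul_sum
    rw [← succ_mul_esymm] at hcheb
    push_cast at hrec ⊢
    rw [hrec]
    linear_combination hcheb

theorem pow_card_mul_esymm_le_choose_mul_pow (hy : ∀ l ∈ s, 0 ≤ y l) {m : ℕ} (hm : m ≤ #s) :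
    (#s : R) ^ m * s.esymm y m ≤ (#s).choose m * (∑ l ∈ s, y l) ^ m := by
  induction m with
  | zero => simp
  | succ r ih =>
    have hr : r ≤ #s := Nat.le_of_succ_le hm
    have hchoose : ((#s).choose (r + 1) * (r + 1) : R) = (#s).choose r * (#s - r) := by
      rw [← Nat.cast_sub hr]
      exact_mod_cast Nat.choose_succ_right_eq #s r
    have hsum := sum_nonneg hy
    have hnr : (0 : R) ≤ #s - r := sub_nonneg.mpr (by exact_mod_cast hr)
    refine le_of_mul_le_mul_right ?_ (by positivity : (0 : R) < r + 1)
    calc (#s : R) ^ (r + 1) * s.esymm y (r + 1) * (r + 1)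
          = #s ^ r * (#s * ((r + 1) * s.esymm y (r + 1))) := by ring
        _ ≤ #s ^ r * ((#s - r) * ((∑ l ∈ s, y l) * s.esymm y r)) :=
          mul_le_mul_of_nonneg_left (card_mul_succ_mul_esymm_le hy r) (by positivity)
        _ = (#s - r) * (∑ l ∈ s, y l) * (#s ^ r * s.esymm y r) := by ring
        _ ≤ (#s - r) * (∑ l ∈ s, y l) * ((#s).choose r * (∑ l ∈ s, y l) ^ r) :=
          mul_le_mul_of_nonneg_left (ih hr) (by positivity)
        _ = (#s).choose (r + 1) * (∑ l ∈ s, y l) ^ (r + 1) * (r + 1) := by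
          linear_combination (-(∑ l ∈ s, y l) ^ (r + 1)) * hchoose

end CommRing

end Finset

open Real

lemma exp_le_one_add_mul_exp_of_le {t x M : ℝ} (ht : 0 ≤ t) (hx : 0 ≤ x) (hxM : x ≤ M) :
    exp (t * x) ≤ 1 + t * x * exp (t * M) := by
  have h := mul_le_mul_of_nonneg_right (one_sub_le_exp_neg (t * x)) (exp_pos (t * x)).le
  rw [← exp_add, neg_add_cancel, exp_zero] at h
  have hmono : t * x * exp (t * x) ≤ t * x * exp (t * M) :=
    mul_le_mul_of_nonneg_left (exp_le_exp.mpr (mul_le_mul_of_nonneg_left hxM ht))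
      (mul_nonneg ht hx)
  linarith

section Chernoff

variable {ι : Type*} (s : Finset ι) {x : ι → ℝ} {t τ : ℝ}

lemma card_filter_le_exp_mul_esymm (k : ℕ) (ht : 0 ≤ t) :
    (#{I ∈ s.powersetCard k | τ ≤ ∑ l ∈ I, x l} : ℝ)
      ≤ exp (-(t * τ)) * s.esymm (fun l => exp (t * x l)) k := by
  rw [esymm_eq_sum, mul_sum, card_eq_sum_ones, Nat.cast_sum, Nat.cast_one, sum_filter]
  refine sum_le_sum fun I _ => ?_
  rw [← exp_sum, ← exp_add, ← mul_sum]
  split_ifs with hI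
  · exact one_le_exp (by nlinarith)
  · exact (exp_pos _).le

theorem card_filter_le_sum_le_choose_mul_exp [DecidableEq ι] {k : ℕ} (hk : k ≤ #s) {M ν : ℝ}
    (hx0 : ∀ l ∈ s, 0 ≤ x l) (hxM : ∀ l ∈ s, x l ≤ M) (hν : ∑ l ∈ s, x l ≤ #s * ν) (ht : 0 ≤ t) :
    (#{I ∈ s.powersetCard k | τ ≤ ∑ l ∈ I, x l} : ℝ)
      ≤ (#s).choose k * exp (t * (k * exp (t * M) * ν - τ)) := by
  set y : ι → ℝ := fun l => exp (t * x l)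
  set B := t * exp (t * M) * ν with hB
  have hy : ∀ l ∈ s, 0 ≤ y l := fun l _ => (exp_pos _).le
  have hmean : ∑ l ∈ s, y l ≤ #s * (1 + B) :=
    calc ∑ l ∈ s, y l ≤ ∑ l ∈ s, (1 + t * x l * exp (t * M)) :=
          sum_le_sum fun l hl => exp_le_one_add_mul_exp_of_le ht (hx0 l hl) (hxM l hl)
      _ = #s + t * exp (t * M) * ∑ l ∈ s, x l := by
          rw [sum_add_distrib, mul_sum]; simp [mul_right_comm]
      _ ≤ #s * (1 + B) := by
          nlinarith [mul_le_mul_of_nonneg_left hν (by positivity : 0 ≤ t * exp (t * M))]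
  have hpow : (0 : ℝ) < #s ^ k := by
    rcases k.eq_zero_or_pos with rfl | hk0
    · simp
    · exact pow_pos (by exact_mod_cast hk0.trans_le hk) k
  have hesymm : s.esymm y k ≤ (#s).choose k * exp (k * B) := by
    refine le_of_mul_le_mul_left ?_ hpow
    calc (#s : ℝ) ^ k * s.esymm y k ≤ (#s).choose k * (∑ l ∈ s, y l) ^ k :=
          pow_card_mul_esymm_le_choose_mul_pow hy hk
      _ ≤ (#s).choose k * (#s * exp B) ^ k := by
          gcongr
          exact hmean.trans (by gcongr; linarith [add_one_le_exp B])
      _ = #s ^ k * ((#s).choose k * exp (k * B)) := by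
          rw [mul_pow, ← exp_nat_mul]; ring
  calc (#{I ∈ s.powersetCard k | τ ≤ ∑ l ∈ I, x l} : ℝ)
      ≤ exp (-(t * τ)) * s.esymm y k := card_filter_le_exp_mul_esymm s k ht
    _ ≤ exp (-(t * τ)) * ((#s).choose k * exp (k * B)) := by gcongr
    _ = (#s).choose k * exp (t * (k * exp (t * M) * ν - τ)) := by
      rw [mul_left_comm, ← exp_add, hB]
      ring_nf

end Chernoff

lemma card_filter_exists_notMem_le {ι : Type*} [Fintype ι] [DecidableEq ι] (k : ℕ)
    (P : ι → Finset ι → Prop) [DecidablePred fun I => ∃ i ∉ I, P i I]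
    [∀ i, DecidablePred (P i)] :
    #{I ∈ univ.powersetCard k | ∃ i ∉ I, P i I}
      ≤ ∑ i, #{I ∈ (univ.erase i).powersetCard k | P i I} := by
  refine (card_le_card fun I hI => ?_).trans card_biUnion_le
  obtain ⟨hIk, i, hiI, hP⟩ := mem_filter.mp hI
  simp only [mem_biUnion, mem_filter, mem_powersetCard, subset_erase] at hIk ⊢
  exact ⟨i, mem_univ i, ⟨⟨hIk.1, hiI⟩, hIk.2⟩, hP⟩

section Columns

variable {ι : Type*} [Fintype ι] {x : ι → ι → ℝ} {k : ℕ} {M τ : ℝ}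
  [DecidablePred fun I : Finset ι => ∃ i ∉ I, τ ≤ ∑ l ∈ I, x i l]

lemma filter_exists_le_sum_eq_empty (hxM : ∀ i l, l ≠ i → x i l ≤ M) (hkM : k * M < τ) :
    {I ∈ (univ : Finset ι).powersetCard k | ∃ i ∉ I, τ ≤ ∑ l ∈ I, x i l} = ∅ := by
  refine filter_false_of_mem fun I hI ⟨i, hiI, hτ⟩ => hkM.not_ge <| hτ.trans ?_
  simpa [(mem_powersetCard.mp hI).2] using
    sum_le_sum fun l (hl : l ∈ I) => hxM i l (ne_of_mem_of_not_mem hl hiI)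

theorem card_filter_exists_le_sum_le [DecidableEq ι] (hk : k < Fintype.card ι) {ν t : ℝ}
    (hx0 : ∀ i l, 0 ≤ x i l) (hxM : ∀ i l, l ≠ i → x i l ≤ M)
    (hν : ∀ i, ∑ l ∈ univ.erase i, x i l ≤ (Fintype.card ι - 1) * ν) (ht : 0 ≤ t) :
    (#{I ∈ (univ : Finset ι).powersetCard k | ∃ i ∉ I, τ ≤ ∑ l ∈ I, x i l} : ℝ)
      ≤ Fintype.card ι *
          ((Fintype.card ι - 1).choose k * exp (t * (k * exp (t * M) * ν - τ))) := by
  have hcard : ∀ i : ι, #(univ.erase i) = Fintype.card ι - 1 := fun i => by simp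
  calc (#{I ∈ (univ : Finset ι).powersetCard k | ∃ i ∉ I, τ ≤ ∑ l ∈ I, x i l} : ℝ)
      ≤ ∑ i, (#{I ∈ (univ.erase i).powersetCard k | τ ≤ ∑ l ∈ I, x i l} : ℝ) := by
        exact_mod_cast card_filter_exists_notMem_le k fun i I => τ ≤ ∑ l ∈ I, x i l
    _ ≤ ∑ _i : ι, (Fintype.card ι - 1).choose k * exp (t * (k * exp (t * M) * ν - τ)) := by
        refine sum_le_sum fun i _ => ?_
        rw [← hcard i]
        refine card_filter_le_sum_le_choose_mul_exp _ (by rw [hcard]; omega)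
          (fun l _ => hx0 i l) (fun l hl => hxM i l (ne_of_mem_erase hl)) ?_ ht
        rw [hcard, Nat.cast_sub (by omega), Nat.cast_one]
        exact hν i
    _ = _ := by rw [sum_const, card_univ, nsmul_eq_mul]

end Columns

lemma exists_chernoff_parameter {a β L μ ν : ℝ} {k : ℕ} (ha0 : 0 < a) (ha1 : a < 1)
    (hβ : 0 < β) (hL : 0 < L) (h1 : μ ^ 4 ≤ (1 - a) ^ 2 * β ^ 2 / (32 * k * L ^ 3))
    (h2 : k * ν ≤ a * β / L) (hkμ : β / L ≤ k * μ ^ 2) :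
    ∃ t, 0 ≤ t ∧ t * (k * exp (t * μ ^ 2) * ν - β / L) ≤ -L := by
  rw [mul_div_assoc] at h2
  set τ := β / L with hτ
  set M := μ ^ 2
  have hτ0 : 0 < τ := div_pos hβ hL
  have hM : 0 < M := lt_of_le_of_ne (sq_nonneg μ) fun h => by
    rw [← h, mul_zero] at hkμ; linarith
  have hk : (0 : ℝ) < k := lt_of_le_of_ne k.cast_nonneg fun h => by
    rw [← h, zero_mul] at hkμ; linarith
  have hcoh : 32 * k * L * M ^ 2 ≤ (1 - a) ^ 2 * τ ^ 2 := by
    have hβτ : β = τ * L := by rw [hτ, div_mul_cancel₀ β hL.ne']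
    rw [le_div_iff₀ (by positivity), hβτ] at h1
    refine le_of_mul_le_mul_right ?_ (by positivity : 0 < L ^ 2)
    linear_combination h1
  have hLM : 32 * L * M ≤ (1 - a) ^ 2 * τ := by
    refine le_of_mul_le_mul_right ?_ hτ0
    nlinarith [mul_le_mul_of_nonneg_left hkμ (by positivity : 0 ≤ 32 * L * M)]
  have hexp : exp ((1 - a) / 4) ≤ 4 / (3 + a) := by
    have := exp_bound_div_one_sub_of_interval (x := (1 - a) / 4) (by linarith) (by linarith)
    rwa [show 1 - (1 - a) / 4 = (3 + a) / 4 by ring, one_div_div] at this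
  refine ⟨(1 - a) / (4 * M), by positivity, ?_⟩
  rw [show (1 - a) / (4 * M) * M = (1 - a) / 4 by field_simp]
  have hmean : k * exp ((1 - a) / 4) * ν ≤ (1 + a) / 2 * τ :=
    calc k * exp ((1 - a) / 4) * ν = exp ((1 - a) / 4) * (k * ν) := by ring
      _ ≤ exp ((1 - a) / 4) * (a * τ) := by gcongr
      _ ≤ 4 / (3 + a) * (a * τ) := by gcongr
      _ ≤ (1 + a) / 2 * τ := by
        rw [div_mul_eq_mul_div, div_le_iff₀ (by linarith)]
        nlinarith
  calc (1 - a) / (4 * M) * (k * exp ((1 - a) / 4) * ν - τ)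
      ≤ (1 - a) / (4 * M) * ((1 + a) / 2 * τ - τ) := by gcongr
    _ = -((1 - a) ^ 2 * τ / (8 * M)) := by field_simp; ring
    _ ≤ -L := by
      rw [neg_le_neg_iff, le_div_iff₀ (by positivity)]
      linarith [mul_pos hL hM]

open scoped Classical

theorem stmt_12_general (m N k : ℕ) (hk : 2 * k + 2 < N)
    (φ : Fin N → Fin m → ℝ)
    (μc μbarsq a β ε : ℝ)
    (hμ_ub : ∀ i l : Fin N, i ≠ l → |∑ t, φ i t * φ l t| ≤ μc)
    (hμ2_ub : ∀ j : Fin N,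
      (1 / ((N : ℝ) - 1)) * ∑ i ∈ Finset.univ.erase j, (∑ t, φ i t * φ j t) ^ 2 ≤ μbarsq)
    (ha0 : 0 < a) (ha1 : a < 1) (hβ : 0 < β) (hε0 : 0 < ε) (hε1 : ε < 1)
    (h1 : μc ^ 4 ≤ (1 - a) ^ 2 * β ^ 2 / (32 * k * (Real.log (2 * N / ε)) ^ 3))
    (h2 : (k : ℝ) * μbarsq ≤ a * β / Real.log (2 * N / ε)) :
    ((((Finset.univ : Finset (Fin N)).powersetCard k).filter
        (fun I => ∃ i ∉ I,
          β / Real.log (2 * N / ε) ≤ ∑ l ∈ I, (∑ t, φ l t * φ i t) ^ 2)).card : ℝ)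
      ≤ ε * (((Finset.univ : Finset (Fin N)).powersetCard k).card : ℝ) := by
  have hN : (2 * k + 2 : ℝ) < N := by exact_mod_cast hk
  have hN0 : (0 : ℝ) < N := by linarith [k.cast_nonneg (α := ℝ)]
  set L := log (2 * N / ε)
  have hL : 0 < L := log_pos ((one_lt_div hε0).mpr (by linarith))
  have hcoh : ∀ i l, l ≠ i → (∑ t, φ l t * φ i t) ^ 2 ≤ μc ^ 2 := fun i l hli =>
    sq_le_sq' (neg_le_of_abs_le (hμ_ub l i hli)) (le_of_abs_le (hμ_ub l i hli))
  rcases lt_or_ge (k * μc ^ 2) (β / L) with hsmall | hlarge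
  · rw [filter_exists_le_sum_eq_empty hcoh hsmall, card_empty, Nat.cast_zero]
    positivity
  have hmean : ∀ i : Fin N, ∑ l ∈ univ.erase i, (∑ t, φ l t * φ i t) ^ 2
      ≤ (Fintype.card (Fin N) - 1) * μbarsq := fun i => by
    rw [Fintype.card_fin, ← div_le_iff₀' (by linarith), ← one_div_mul_eq_div]
    exact hμ2_ub i
  obtain ⟨t, ht, hexp⟩ := exists_chernoff_parameter ha0 ha1 hβ hL h1 h2 hlarge
  have hchoose : ((N - 1).choose k : ℝ) ≤ N.choose k := by
    exact_mod_cast Nat.choose_le_choose k (N.sub_le 1)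
  calc _ ≤ Fintype.card (Fin N) * ((Fintype.card (Fin N) - 1).choose k
          * exp (t * (k * exp (t * μc ^ 2) * μbarsq - β / L))) :=
        card_filter_exists_le_sum_le (by rw [Fintype.card_fin]; omega) (fun _ _ => sq_nonneg _)
          hcoh hmean ht
    _ ≤ N * ((N - 1).choose k * exp (-L)) := by rw [Fintype.card_fin]; gcongr
    _ = (N - 1).choose k * ε / 2 := by
        rw [exp_neg, exp_log (by positivity), inv_div]
        field_simp
    _ ≤ ε * N.choose k := by
        linarith [mul_le_mul_of_nonneg_left hchoose hε0.le,
          mul_nonneg hε0.le (N.choose k).cast_nonneg]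
    _ = _ := by rw [card_powersetCard, card_univ, Fintype.card_fin]

/-- SINC theorem: if the mutual coherence `μ` and mean square coherence `μ̄²` of an
`m × N` unit-norm-column matrix satisfy `μ⁴ ≤ (1-a)²β²/(32k(log(2N/ε))³)` and
`k μ̄² ≤ aβ/log(2N/ε)`, then for a uniformly random `k`-subset `I`,
`P(max_{i ∉ I} ‖Φ_Iᵀ φ_i‖₂² ≥ β/log(2N/ε)) ≤ ε`.  Probability is expressed by
counting `k`-subsets. -/
theorem stmt_12 (m N k : ℕ) (hk : 2 * k + 2 < N)
    (φ : Fin N → Fin m → ℝ) (hcol : ∀ i, ∑ t, φ i t ^ 2 = 1)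
    (μc μbarsq a β ε : ℝ)
    (hμ_ub : ∀ i l : Fin N, i ≠ l → |∑ t, φ i t * φ l t| ≤ μc)
    (hμ2_ub : ∀ j : Fin N,
      (1 / ((N : ℝ) - 1)) * ∑ i ∈ Finset.univ.erase j, (∑ t, φ i t * φ j t) ^ 2 ≤ μbarsq)
    (ha0 : 0 < a) (ha1 : a < 1) (hβ : 0 < β) (hε0 : 0 < ε) (hε1 : ε < 1)
    (h1 : μc ^ 4 ≤ (1 - a) ^ 2 * β ^ 2 / (32 * k * (Real.log (2 * N / ε)) ^ 3))
    (h2 : (k : ℝ) * μbarsq ≤ a * β / Real.log (2 * N / ε)) :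
    ((((Finset.univ : Finset (Fin N)).powersetCard k).filter
        (fun I => ∃ i ∉ I,
          β / Real.log (2 * N / ε) ≤ ∑ l ∈ I, (∑ t, φ l t * φ i t) ^ 2)).card : ℝ)
      ≤ ε * (((Finset.univ : Finset (Fin N)).powersetCard k).card : ℝ) :=
  stmt_12_general m N k hk φ μc μbarsq a β ε hμ_ub hμ2_ub ha0 ha1 hβ hε0 hε1 h1 h2
end

section
/- Let Φ be an m×N matrix with unit-norm columns, let I ⊆ [N] with |I| = k be such that ‖(Φ_IᵀΦ_I)^{-1}‖ ≤ 1/(1-δ) and ‖Φ_Iᵀφ_i‖₂ ≤ (1-δ)/√s for all i ∈ I^c, for some δ ∈ (0,1) and s > 0. If h ∈ ℝ^N satisfies Φh = 0, then ‖h_I‖₂ ≤ s^{-1/2}‖h_{I^c}‖₁. -/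
open Matrix

/-- If `‖(Φ_Iᵀ Φ_I)⁻¹‖ ≤ 1/(1-δ)` and `‖Φ_Iᵀ φ_i‖₂ ≤ (1-δ)/√s` for all `i ∉ I`,
then any `h` with `Φh = 0` satisfies `‖h_I‖₂ ≤ s^{-1/2} ‖h_{I^c}‖₁`. -/
theorem stmt_14 (m N k : ℕ) (δ s : ℝ) (hδ0 : 0 < δ) (hδ1 : δ < 1) (hs : 0 < s)
    (Φ : Matrix (Fin m) (Fin N) ℝ) (hcol : ∀ j, ∑ i, Φ i j ^ 2 = 1)
    (I : Finset (Fin N)) (hI : I.card = k)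
    (G : Matrix ↥I ↥I ℝ)
    (hG : G = (Φ.submatrix id (Subtype.val : ↥I → Fin N))ᵀ *
      Φ.submatrix id (Subtype.val : ↥I → Fin N))
    (hGu : IsUnit G)
    (hGinv : ∀ u : ↥I → ℝ,
      Real.sqrt (∑ i, (G⁻¹.mulVec u) i ^ 2) ≤ (1 / (1 - δ)) * Real.sqrt (∑ i, u i ^ 2))
    (hcross : ∀ i : Fin N, i ∉ I →
      Real.sqrt (∑ l : ↥I, (∑ t, Φ t l.val * Φ t i) ^ 2) ≤ (1 - δ) / Real.sqrt s)
    (h : Fin N → ℝ) (hh : Φ.mulVec h = 0) :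
    Real.sqrt (∑ i : ↥I, h i.val ^ 2) ≤ (1 / Real.sqrt s) * ∑ i ∈ Iᶜ, |h i| := by
  have h1δ : (0:ℝ) < 1 - δ := by linarith
  have hss : (0:ℝ) < Real.sqrt s := Real.sqrt_pos.mpr hs
  -- the linear isometry to Euclidean space
  set e : (↥I → ℝ) ≃ₗ[ℝ] EuclideanSpace ℝ ↥I := (WithLp.linearEquiv 2 ℝ (↥I → ℝ)).symm
    with he
  have hnorm : ∀ u : ↥I → ℝ, ‖e u‖ = Real.sqrt (∑ i, u i ^ 2) := by
    intro u
    rw [EuclideanSpace.norm_eq]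
    congr 1
    refine Finset.sum_congr rfl fun i _ => ?_
    simp [he, Real.norm_eq_abs, sq_abs]
  -- cross vectors
  set w : Fin N → (↥I → ℝ) := fun j l => ∑ t, Φ t l.val * Φ t j with hw
  set v : ↥I → ℝ := fun l => ∑ j ∈ Iᶜ, h j * w j l with hv
  -- key identity: G h_I = -v
  have key : G.mulVec (fun l : ↥I => h l.val) = -v := by
    funext l
    have h0 : ∑ j : Fin N, w j l * h j = 0 := by
      have : ∀ t, ∑ j, Φ t j * h j = 0 := fun t => congrFun hh t
      calc ∑ j, w j l * h j = ∑ j, ∑ t, Φ t l.val * Φ t j * h j := by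
            simp [hw, Finset.sum_mul]
        _ = ∑ t, ∑ j, Φ t l.val * Φ t j * h j := Finset.sum_comm
        _ = ∑ t, Φ t l.val * ∑ j, Φ t j * h j := by simp [Finset.mul_sum, mul_assoc]
        _ = 0 := by simp [this]
    have hsplit : ∑ j ∈ I, w j l * h j + ∑ j ∈ Iᶜ, w j l * h j = 0 := by
      rw [Finset.sum_add_sum_compl]; exact h0
    have hIsum : ∑ j ∈ I, w j l * h j = G.mulVec (fun l : ↥I => h l.val) l := by
      rw [← Finset.sum_attach I (fun j => w j l * h j)]
      subst hG
      simp [Matrix.mulVec, dotProduct, Matrix.mul_apply, hw, mul_comm]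
    have : G.mulVec (fun l : ↥I => h l.val) l = -∑ j ∈ Iᶜ, w j l * h j := by
      rw [← hIsum]; linarith
    simpa [hv, mul_comm] using this
  -- recover h_I from G⁻¹
  have hrec : (fun l : ↥I => h l.val) = G⁻¹.mulVec (-v) := by
    rw [← key, Matrix.mulVec_mulVec,
      Matrix.nonsing_inv_mul G ((Matrix.isUnit_iff_isUnit_det G).mp hGu), Matrix.one_mulVec]
  -- bound ‖v‖
  have hvbound : Real.sqrt (∑ i, v i ^ 2) ≤ ((1 - δ) / Real.sqrt s) * ∑ j ∈ Iᶜ, |h j| := by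
    rw [← hnorm]
    have hvsum : e v = ∑ j ∈ Iᶜ, h j • e (w j) := by
      have : v = ∑ j ∈ Iᶜ, h j • w j := by
        funext l
        simp [hv, Finset.sum_apply]
      rw [this, map_sum]
      simp
    rw [hvsum]
    calc ‖∑ j ∈ Iᶜ, h j • e (w j)‖ ≤ ∑ j ∈ Iᶜ, ‖h j • e (w j)‖ := norm_sum_le _ _
      _ ≤ ∑ j ∈ Iᶜ, |h j| * ((1 - δ) / Real.sqrt s) := by
          refine Finset.sum_le_sum fun j hj => ?_
          rw [norm_smul, Real.norm_eq_abs]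
          refine mul_le_mul_of_nonneg_left ?_ (abs_nonneg _)
          rw [hnorm]
          exact hcross j (Finset.mem_compl.mp hj)
      _ = ((1 - δ) / Real.sqrt s) * ∑ j ∈ Iᶜ, |h j| := by
          rw [← Finset.sum_mul, mul_comm]
  -- combine
  have step : Real.sqrt (∑ i : ↥I, h i.val ^ 2)
      ≤ (1 / (1 - δ)) * Real.sqrt (∑ i, v i ^ 2) := by
    have := hGinv (-v)
    have hneg : Real.sqrt (∑ i, (-v) i ^ 2) = Real.sqrt (∑ i, v i ^ 2) := by
      congr 1; refine Finset.sum_congr rfl fun i _ => by simp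
    calc Real.sqrt (∑ i : ↥I, h i.val ^ 2)
        = Real.sqrt (∑ i, (G⁻¹.mulVec (-v)) i ^ 2) := by rw [← hrec]
      _ ≤ (1 / (1 - δ)) * Real.sqrt (∑ i, (-v) i ^ 2) := hGinv (-v)
      _ = (1 / (1 - δ)) * Real.sqrt (∑ i, v i ^ 2) := by rw [hneg]
  calc Real.sqrt (∑ i : ↥I, h i.val ^ 2)
      ≤ (1 / (1 - δ)) * Real.sqrt (∑ i, v i ^ 2) := step
    _ ≤ (1 / (1 - δ)) * (((1 - δ) / Real.sqrt s) * ∑ j ∈ Iᶜ, |h j|) := by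
        refine mul_le_mul_of_nonneg_left hvbound (by positivity)
    _ = (1 / Real.sqrt s) * ∑ i ∈ Iᶜ, |h i| := by
        field_simp
end

section
/- Let Φ be an m×N matrix, x ∈ ℝ^N, y = Φx, and let x̂ be a minimizer of ‖z‖₁ subject to Φz = y. Let I ⊆ [N] and suppose there exists v ∈ ℝ^N in the row space of Φ with v_I = sgn(x_I) and ‖v_{I^c}‖_∞ ≤ 1/2. Then the error h = x - x̂ satisfies ‖h_{I^c}‖₁ ≤ 4‖x_{I^c}‖₁. -/
open Matrix

/-- If a vector `v` in the row space of `Φ` satisfies `v_I = sgn(x_I)` and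
`‖v_{I^c}‖_∞ ≤ 1/2`, then the Basis Pursuit error `h = x - x̂` satisfies
`‖h_{I^c}‖₁ ≤ 4 ‖x_{I^c}‖₁`. -/
theorem stmt_15 (m N : ℕ) (Φ : Matrix (Fin m) (Fin N) ℝ)
    (x xhat : Fin N → ℝ)
    (hfeas : Φ.mulVec xhat = Φ.mulVec x)
    (hmin : ∀ z : Fin N → ℝ, Φ.mulVec z = Φ.mulVec x → ∑ i, |xhat i| ≤ ∑ i, |z i|)
    (I : Finset (Fin N)) (w : Fin m → ℝ) (v : Fin N → ℝ)
    (hv : v = Φᵀ.mulVec w)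
    (hvI : ∀ i ∈ I, v i = Real.sign (x i))
    (hvIc : ∀ i ∉ I, |v i| ≤ 1 / 2) :
    ∑ i ∈ Iᶜ, |x i - xhat i| ≤ 4 * ∑ i ∈ Iᶜ, |x i| := by
  set h : Fin N → ℝ := fun i => x i - xhat i with hh
  -- Φ h = 0
  have hΦh : Φ.mulVec h = 0 := by
    have : h = x - xhat := rfl
    rw [this, Matrix.mulVec_sub, hfeas, sub_self]
  -- ⟨v, h⟩ = 0
  have hvh : ∑ i, v i * h i = 0 := by
    have step : ∑ i, v i * h i = ∑ j, w j * (Φ.mulVec h) j := by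
      calc ∑ i, v i * h i = ∑ i, ∑ j, Φ j i * w j * h i := by
            apply Finset.sum_congr rfl
            intro i _
            rw [hv]
            simp [Matrix.mulVec, dotProduct, Finset.sum_mul]
        _ = ∑ j, ∑ i, Φ j i * w j * h i := Finset.sum_comm
        _ = ∑ j, w j * (Φ.mulVec h) j := by
            apply Finset.sum_congr rfl
            intro j _
            simp only [Matrix.mulVec, dotProduct, Finset.mul_sum]
            apply Finset.sum_congr rfl
            intro i _
            ring
    rw [step, hΦh]
    simp
  -- optimality
  have hopt : ∑ i, |xhat i| ≤ ∑ i, |x i| := hmin x rfl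
  -- main inequality from l1 minimality
  have hsum1 : (∑ i ∈ I, (|x i| - v i * h i)) + ∑ i ∈ Iᶜ, (|h i| - |x i|)
      ≤ ∑ i, |xhat i| := by
    rw [← Finset.sum_add_sum_compl I (fun i => |xhat i|)]
    apply add_le_add
    · apply Finset.sum_le_sum
      intro i hi
      rw [hvI i hi]
      rcases lt_trichotomy (x i) 0 with hx | hx | hx
      · rw [Real.sign_of_neg hx]
        have h1 : -|xhat i| ≤ xhat i := neg_abs_le _
        have h2 : |x i| = -(x i) := abs_of_neg hx
        simp only [hh]
        nlinarith
      · rw [hx, Real.sign_zero]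
        simp [abs_nonneg]
      · rw [Real.sign_of_pos hx]
        have h1 : xhat i ≤ |xhat i| := le_abs_self _
        have h2 : |x i| = x i := abs_of_pos hx
        simp only [hh]
        nlinarith
    · apply Finset.sum_le_sum
      intro i _
      have : |x i - xhat i| ≤ |x i| + |xhat i| := abs_sub _ _
      simp only [hh]
      linarith
  -- split the sum of v*h
  have hsplit : (∑ i ∈ I, v i * h i) + ∑ i ∈ Iᶜ, v i * h i = 0 := by
    rw [Finset.sum_add_sum_compl I (fun i => v i * h i)]
    exact hvh
  -- bound the off-support part of v*h
  have hbound : -(∑ i ∈ Iᶜ, v i * h i) ≤ (1/2) * ∑ i ∈ Iᶜ, |h i| := by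
    rw [← Finset.sum_neg_distrib, Finset.mul_sum]
    apply Finset.sum_le_sum
    intro i hi
    have hi' : i ∉ I := Finset.mem_compl.mp hi
    have h1 : -(v i * h i) ≤ |v i * h i| := neg_le_abs _
    have h2 : |v i * h i| = |v i| * |h i| := abs_mul _ _
    have h3 : |v i| * |h i| ≤ (1/2) * |h i| :=
      mul_le_mul_of_nonneg_right (hvIc i hi') (abs_nonneg _)
    rw [h2] at h1
    exact h1.trans h3
  have hx_split : (∑ i ∈ I, |x i|) + ∑ i ∈ Iᶜ, |x i| = ∑ i, |x i| :=
    Finset.sum_add_sum_compl I (fun i => |x i|)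
  rw [Finset.sum_sub_distrib, Finset.sum_sub_distrib] at hsum1
  have goal_eq : ∑ i ∈ Iᶜ, |x i - xhat i| = ∑ i ∈ Iᶜ, |h i| := rfl
  rw [goal_eq]
  linarith
end

section
/- Let Φ be an m×N matrix with unit-norm columns, I ⊆ [N] with |I| = k, δ ∈ (0,1), ε ∈ (0,1). Suppose ‖(Φ_IᵀΦ_I)^{-1}‖ ≤ 1/(1-δ) and ‖Φ_Iᵀφ_i‖₂ ≤ (1-δ)/√(8 log(2N/ε)) for all i ∈ I^c. Let σ ∈ {±1}^I be a vector of i.i.d. uniform signs, and set v = ΦᵀΦ_I(Φ_IᵀΦ_I)^{-1}σ. Then v_I = σ, v lies in the row space of Φ, and P(‖v_{I^c}‖_∞ > 1/2) ≤ ε. -/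
open Matrix Finset
open scoped Classical

/-!
On the coordinates in `I` the matrix `ΦᵀΦ_I(Φ_IᵀΦ_I)⁻¹` is the identity, so `v_I = σ`, and
`v = Φᵀ(Φ_I(Φ_IᵀΦ_I)⁻¹σ)` lies in the row space of `Φ`. For `i ∉ I`, symmetry of the Gram matrix
gives `v_i = ⟨s_i, σ⟩` with `s_i = (Φ_IᵀΦ_I)⁻¹Φ_Iᵀφ_i`, and the two hypotheses give
`‖s_i‖₂ ≤ 1/√(8 log(2N/ε))`. Hoeffding's inequality for Rademacher sums (exponential moments
and `cosh x ≤ exp (x²/2)`) bounds the fraction of sign patterns with `|v_i| > 1/2` by `ε/N`,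
and a union bound over `i ∉ I` finishes.
-/

section SignVector

variable {ι : Type*} [Fintype ι] [DecidableEq ι]

def signVector (b : ι → Bool) : ι → ℝ := fun i => if b i then 1 else -1

lemma sum_bool_exp_mul_sign (x : ℝ) :
    ∑ c : Bool, Real.exp (x * if c then 1 else -1) = 2 * Real.cosh x := by
  rw [Fintype.sum_bool, Real.cosh_eq]
  simp only [if_true, Bool.false_eq_true, if_false, mul_one, mul_neg_one]
  ring

lemma sum_exp_mul_dotProduct_signVector_le (s : ι → ℝ) (t : ℝ) :
    ∑ b : ι → Bool, Real.exp (t * (s ⬝ᵥ signVector b))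
      ≤ 2 ^ Fintype.card ι * Real.exp (t ^ 2 * (∑ i, s i ^ 2) / 2) := by
  calc ∑ b : ι → Bool, Real.exp (t * (s ⬝ᵥ signVector b))
      = ∏ i, ∑ c : Bool, Real.exp (t * s i * if c then 1 else -1) := by
        rw [Fintype.prod_sum]
        refine Fintype.sum_congr _ _ fun b => ?_
        simp only [dotProduct, signVector, mul_sum, Real.exp_sum, mul_assoc]
    _ ≤ ∏ i, 2 * Real.exp ((t * s i) ^ 2 / 2) := by
        gcongr with i
        rw [sum_bool_exp_mul_sign]
        gcongr
        exact Real.cosh_le_exp_half_sq _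
    _ = 2 ^ Fintype.card ι * Real.exp (t ^ 2 * (∑ i, s i ^ 2) / 2) := by
        rw [prod_mul_distrib, prod_const, ← Real.exp_sum, card_univ,
          mul_sum, sum_div]
        simp only [mul_pow]

lemma card_lt_dotProduct_signVector_le (s : ι → ℝ) (a : ℝ) {t : ℝ} (ht : 0 ≤ t) :
    (#{b | a < s ⬝ᵥ signVector b} : ℝ)
      ≤ 2 ^ Fintype.card ι * Real.exp (t ^ 2 * (∑ i, s i ^ 2) / 2 - t * a) := by
  calc (#{b | a < s ⬝ᵥ signVector b} : ℝ)
      = ∑ b, if a < s ⬝ᵥ signVector b then (1 : ℝ) else 0 := by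
        rw [card_filter]; push_cast; rfl
    _ ≤ ∑ b, Real.exp (t * (s ⬝ᵥ signVector b)) * Real.exp (-(t * a)) := by
        gcongr with b
        split_ifs with h
        · rw [← Real.exp_add, Real.one_le_exp_iff]
          nlinarith
        · positivity
    _ ≤ 2 ^ Fintype.card ι * Real.exp (t ^ 2 * (∑ i, s i ^ 2) / 2) * Real.exp (-(t * a)) := by
        rw [← sum_mul]
        gcongr
        exact sum_exp_mul_dotProduct_signVector_le s t
    _ = _ := by rw [mul_assoc, ← Real.exp_add, sub_eq_add_neg]

lemma card_lt_abs_dotProduct_signVector_le (s : ι → ℝ) {a L : ℝ} (ha : 0 < a) (hL : 0 ≤ L)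
    (hs : 2 * L * ∑ i, s i ^ 2 ≤ a ^ 2) :
    (#{b | a < |s ⬝ᵥ signVector b|} : ℝ) ≤ 2 * 2 ^ Fintype.card ι * Real.exp (-L) := by
  -- `t = 2L/a` rather than the optimal `a/‖s‖²`, which would fail when `s = 0`.
  have ht : 0 ≤ 2 * L / a := by positivity
  have hexp : (2 * L / a) ^ 2 * (∑ i, s i ^ 2) / 2 - 2 * L / a * a ≤ -L := by
    rw [div_mul_cancel₀ _ ha.ne', div_pow, div_mul_eq_mul_div, div_div, sub_le_iff_le_add,
      div_le_iff₀ (by positivity)]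
    nlinarith
  have hsplit : ({b | a < |s ⬝ᵥ signVector b|} : Finset (ι → Bool)) ⊆
      ({b | a < s ⬝ᵥ signVector b} : Finset (ι → Bool)) ∪
        ({b | a < (-s) ⬝ᵥ signVector b} : Finset (ι → Bool)) := by
    intro b
    simp only [mem_filter, mem_union, mem_univ, true_and, neg_dotProduct]
    exact lt_abs.mp
  calc (#{b | a < |s ⬝ᵥ signVector b|} : ℝ)
      ≤ #{b | a < s ⬝ᵥ signVector b} + #{b | a < (-s) ⬝ᵥ signVector b} := by
        exact_mod_cast (card_le_card hsplit).trans (card_union_le _ _)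
    _ ≤ 2 ^ Fintype.card ι * Real.exp (-L) + 2 ^ Fintype.card ι * Real.exp (-L) := by
        gcongr
        · exact (card_lt_dotProduct_signVector_le s a ht).trans (by gcongr)
        · refine (card_lt_dotProduct_signVector_le (-s) a ht).trans ?_
          simp only [Pi.neg_apply, neg_sq]
          gcongr
    _ = 2 * 2 ^ Fintype.card ι * Real.exp (-L) := by ring

lemma card_half_lt_abs_dotProduct_signVector_le (s : ι → ℝ) {L : ℝ} (hL : 0 < L)
    (hs : √(∑ i, s i ^ 2) ≤ 1 / √(8 * L)) :
    (#{b | 1 / 2 < |s ⬝ᵥ signVector b|} : ℝ) ≤ 2 * 2 ^ Fintype.card ι * Real.exp (-L) := by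
  refine card_lt_abs_dotProduct_signVector_le s one_half_pos hL.le ?_
  rw [one_div, ← Real.sqrt_inv, Real.sqrt_le_sqrt_iff (by positivity)] at hs
  calc 2 * L * ∑ i, s i ^ 2 = 8 * L * (∑ i, s i ^ 2) / 4 := by ring
    _ ≤ 8 * L * (8 * L)⁻¹ / 4 := by gcongr
    _ = (1 / 2) ^ 2 := by field_simp; norm_num

end SignVector

lemma card_filter_exists_mem_le {α β : Type*} [Fintype α] (s : Finset β) (p : β → α → Prop)
    {c : ℝ} (h : ∀ i ∈ s, (#{a | p i a} : ℝ) ≤ c) :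
    (#{a | ∃ i ∈ s, p i a} : ℝ) ≤ #s * c := by
  have hsub : ({a | ∃ i ∈ s, p i a} : Finset α) ⊆ s.biUnion fun i => {a | p i a} :=
    fun a ha => by simpa only [mem_biUnion, mem_filter, mem_univ, true_and] using ha
  calc (#{a | ∃ i ∈ s, p i a} : ℝ) ≤ ∑ i ∈ s, (#{a | p i a} : ℝ) := by
        exact_mod_cast (card_le_card hsub).trans card_biUnion_le
    _ ≤ #s * c := by
        rw [← nsmul_eq_mul, ← sum_const]
        exact sum_le_sum h

section GramInverse

variable {R : Type*} [CommRing R] {m n κ : Type*} [Fintype m] [Fintype κ]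

lemma isSymm_gram_inv [DecidableEq κ] (A : Matrix m κ R) : (Aᵀ * A)⁻¹.IsSymm := by
  rw [IsSymm, transpose_nonsing_inv, transpose_mul, transpose_transpose]

lemma mulVec_gram_inv_apply [DecidableEq κ] (Φ : Matrix m n R) (f : κ → n)
    (hG : IsUnit ((Φ.submatrix id f)ᵀ * Φ.submatrix id f).det) (x : κ → R) (l : κ) :
    ((Φᵀ * Φ.submatrix id f * ((Φ.submatrix id f)ᵀ * Φ.submatrix id f)⁻¹) *ᵥ x) (f l) = x l := by
  have hrows :
      (Φᵀ * Φ.submatrix id f * ((Φ.submatrix id f)ᵀ * Φ.submatrix id f)⁻¹).submatrix f id = 1 := by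
    rw [submatrix_mul _ _ f id id Function.bijective_id, submatrix_mul _ _ f id id
      Function.bijective_id, ← transpose_submatrix, submatrix_id_id, submatrix_id_id,
      mul_nonsing_inv _ hG]
  exact congrFun (congrArg (· *ᵥ x) hrows) l |>.trans (congrFun (one_mulVec x) l)

lemma mulVec_mul_symm_apply (Φ : Matrix m n R) (B : Matrix m κ R) {H : Matrix κ κ R}
    (hH : H.IsSymm) (x : κ → R) (j : n) :
    ((Φᵀ * B * H) *ᵥ x) j = (H *ᵥ (Bᵀ *ᵥ fun t => Φ t j)) ⬝ᵥ x := by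
  conv_rhs => rw [← hH, mulVec_transpose, mulVec_transpose]
  rw [Matrix.mul_assoc, ← mulVec_mulVec, ← mulVec_mulVec, ← dotProduct_mulVec, ← dotProduct_mulVec]
  rfl

end GramInverse

lemma card_half_lt_abs_mulVec_gram_inv_signVector_le {m n κ : Type*} [Fintype m] [Fintype κ]
    [DecidableEq κ] (Φ : Matrix m n ℝ) (B : Matrix m κ ℝ) {δ L : ℝ} (hδ : δ < 1) (hL : 0 < L)
    (hGinv : ∀ u : κ → ℝ, √(∑ l, ((Bᵀ * B)⁻¹ *ᵥ u) l ^ 2) ≤ 1 / (1 - δ) * √(∑ l, u l ^ 2))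
    (j : n) (hj : √(∑ l, (Bᵀ *ᵥ fun t => Φ t j) l ^ 2) ≤ (1 - δ) / √(8 * L)) :
    (#{b | 1 / 2 < |((Φᵀ * B * (Bᵀ * B)⁻¹) *ᵥ signVector b) j|} : ℝ)
      ≤ 2 * 2 ^ Fintype.card κ * Real.exp (-L) := by
  have hs : √(∑ l, ((Bᵀ * B)⁻¹ *ᵥ (Bᵀ *ᵥ fun t => Φ t j)) l ^ 2) ≤ 1 / √(8 * L) := by
    have h1δ : 0 < 1 - δ := sub_pos.mpr hδ
    calc _ ≤ 1 / (1 - δ) * ((1 - δ) / √(8 * L)) :=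
          (hGinv _).trans (mul_le_mul_of_nonneg_left hj (by positivity))
      _ = 1 / √(8 * L) := by field_simp
  simp only [mulVec_mul_symm_apply Φ B (isSymm_gram_inv B)]
  exact card_half_lt_abs_dotProduct_signVector_le _ hL hs

theorem stmt_16_general (m N k : ℕ) (δ ε : ℝ) (hδ1 : δ < 1)
    (hε0 : 0 < ε) (hε1 : ε < 1)
    (Φ : Matrix (Fin m) (Fin N) ℝ)
    (I : Finset (Fin N)) (hI : I.card = k)
    (G : Matrix ↥I ↥I ℝ)
    (hG : G = (Φ.submatrix id (Subtype.val : ↥I → Fin N))ᵀ *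
      Φ.submatrix id (Subtype.val : ↥I → Fin N))
    (hGu : IsUnit G)
    (hGinv : ∀ u : ↥I → ℝ,
      Real.sqrt (∑ i, (G⁻¹.mulVec u) i ^ 2) ≤ (1 / (1 - δ)) * Real.sqrt (∑ i, u i ^ 2))
    (hcross : ∀ i : Fin N, i ∉ I →
      Real.sqrt (∑ l : ↥I, (∑ t, Φ t l.val * Φ t i) ^ 2) ≤
        (1 - δ) / Real.sqrt (8 * Real.log (2 * N / ε)))
    (v : (↥I → Bool) → Fin N → ℝ)
    (hv : ∀ b, v b = (Φᵀ * Φ.submatrix id (Subtype.val : ↥I → Fin N) * G⁻¹).mulVec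
      (fun l => if b l then (1 : ℝ) else -1)) :
    (∀ b (l : ↥I), v b l.val = (if b l then (1 : ℝ) else -1)) ∧
    (∀ b, ∃ wvec : Fin m → ℝ, v b = Φᵀ.mulVec wvec) ∧
    ((((Finset.univ : Finset (↥I → Bool))).filter
        (fun b => ∃ i ∉ I, 1 / 2 < |v b i|)).card : ℝ) ≤ ε * 2 ^ k := by
  subst hG
  set A := Φ.submatrix id (Subtype.val : ↥I → Fin N)
  refine ⟨fun b l => ?_, fun b => ⟨(A * (Aᵀ * A)⁻¹) *ᵥ fun l => if b l then 1 else -1, ?_⟩, ?_⟩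
  · rw [hv]
    exact mulVec_gram_inv_apply Φ Subtype.val ((isUnit_iff_isUnit_det _).mp hGu) _ l
  · rw [hv, mulVec_mulVec, Matrix.mul_assoc]
  have hcoord : ∀ i ∉ I, (#{b | 1 / 2 < |v b i|} : ℝ) ≤ ε * 2 ^ k / N := by
    intro i hi
    have hN : (1 : ℝ) ≤ N := by exact_mod_cast i.pos
    have hL : 0 < Real.log (2 * N / ε) := Real.log_pos (by rw [lt_div_iff₀ hε0]; linarith)
    calc (#{b | 1 / 2 < |v b i|} : ℝ)
        ≤ 2 * 2 ^ Fintype.card I * Real.exp (-Real.log (2 * N / ε)) := by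
          simp only [hv]
          exact card_half_lt_abs_mulVec_gram_inv_signVector_le Φ A hδ1 hL hGinv i (hcross i hi)
      _ = ε * 2 ^ k / N := by
          rw [Real.exp_neg, Real.exp_log (by positivity), Fintype.card_coe, hI]
          field_simp
  have hunion := card_filter_exists_mem_le Iᶜ (fun i b => 1 / 2 < |v b i|)
    fun i hi => hcoord i (mem_compl.mp hi)
  simp only [mem_compl] at hunion
  calc _ ≤ #Iᶜ * (ε * 2 ^ k / N) := hunion
    _ = ε * 2 ^ k * (#Iᶜ / N) := by ring
    _ ≤ ε * 2 ^ k := by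
        refine mul_le_of_le_one_right (by positivity) (div_le_one_of_le₀ ?_ (Nat.cast_nonneg N))
        exact_mod_cast (card_le_univ Iᶜ).trans_eq (Fintype.card_fin N)

/-- With `‖(Φ_IᵀΦ_I)⁻¹‖ ≤ 1/(1-δ)` and `‖Φ_Iᵀφ_i‖₂ ≤ (1-δ)/√(8 log(2N/ε))` for
`i ∉ I`, the vector `v = ΦᵀΦ_I(Φ_IᵀΦ_I)⁻¹σ` built from i.i.d. uniform signs `σ`
satisfies `v_I = σ`, lies in the row space of `Φ`, and
`P(‖v_{I^c}‖_∞ > 1/2) ≤ ε` (probability = counting over sign patterns). -/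
theorem stmt_16 (m N k : ℕ) (δ ε : ℝ) (hδ0 : 0 < δ) (hδ1 : δ < 1)
    (hε0 : 0 < ε) (hε1 : ε < 1)
    (Φ : Matrix (Fin m) (Fin N) ℝ) (hcol : ∀ j, ∑ i, Φ i j ^ 2 = 1)
    (I : Finset (Fin N)) (hI : I.card = k)
    (G : Matrix ↥I ↥I ℝ)
    (hG : G = (Φ.submatrix id (Subtype.val : ↥I → Fin N))ᵀ *
      Φ.submatrix id (Subtype.val : ↥I → Fin N))
    (hGu : IsUnit G)
    (hGinv : ∀ u : ↥I → ℝ,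
      Real.sqrt (∑ i, (G⁻¹.mulVec u) i ^ 2) ≤ (1 / (1 - δ)) * Real.sqrt (∑ i, u i ^ 2))
    (hcross : ∀ i : Fin N, i ∉ I →
      Real.sqrt (∑ l : ↥I, (∑ t, Φ t l.val * Φ t i) ^ 2) ≤
        (1 - δ) / Real.sqrt (8 * Real.log (2 * N / ε)))
    (v : (↥I → Bool) → Fin N → ℝ)
    (hv : ∀ b, v b = (Φᵀ * Φ.submatrix id (Subtype.val : ↥I → Fin N) * G⁻¹).mulVec
      (fun l => if b l then (1 : ℝ) else -1)) :
    (∀ b (l : ↥I), v b l.val = (if b l then (1 : ℝ) else -1)) ∧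
    (∀ b, ∃ wvec : Fin m → ℝ, v b = Φᵀ.mulVec wvec) ∧
    ((((Finset.univ : Finset (↥I → Bool))).filter
        (fun b => ∃ i ∉ I, 1 / 2 < |v b i|)).card : ℝ) ≤ ε * 2 ^ k :=
  stmt_16_general m N k δ ε hδ1 hε0 hε1 Φ I hI G hG hGu hGinv hcross v hv
end
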